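/- Let n, n_u, m be even positive integers, and let A ∈ ℝ^{n×n}, B_u ∈ ℝ^{n×n_u}, C ∈ ℝ^{n_u×n} be real matrices. Define S̃ = Θ_n B_u Θ_{n_u} B_uᵀ Θ_n − Θ_n A − Aᵀ Θ_n − Cᵀ Θ_{n_u} C and let r = rank(S̃). Suppose B_{v1} ∈ ℝ^{n×n_u} and B_{v2} ∈ ℝ^{n×m} satisfy B_{v1} = Θ_n Cᵀ Θ_{n_u} and A Θ_n + Θ_n Aᵀ + B_u Θ_{n_u} B_uᵀ + B_{v1} Θ_{n_u} B_{v1}ᵀ + B_{v2} Θ_m B_{v2}ᵀ = 0. Then m ≥ r. (Theorem 2, necessity: any physical realization requires at least rank(S̃) additional quantum noise channels.) -/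

import Mathlib

open Matrix

noncomputable section

/-! Conjugating the physical realizability identity by `Θ_n` (using `Θ² = -1` and `Θᵀ = -Θ`)
turns its first four terms into `S̃`, so `S̃ = -Θ_n B_{v2} Θ_m B_{v2}ᵀ Θ_n` factors through
`ℝ^m` and has rank at most `m`. -/

/-- The canonical `k × k` block-diagonal skew-symmetric matrix
`Θ_k = diag(J, …, J)` with `J = [[0,1],[-1,0]]` (for `k` even). -/
def ThetaM (k : ℕ) : Matrix (Fin k) (Fin k) ℝ :=
  Matrix.of fun i j =>
    if j.val = i.val + 1 ∧ i.val % 2 = 0 then 1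
    else if i.val = j.val + 1 ∧ j.val % 2 = 0 then -1
    else 0

/-- The index paired with `i` by the `2 × 2` blocks of `ThetaM k`, i.e. `i xor 1`. -/
def thetaPartner {k : ℕ} (hk : Even k) (i : Fin k) : Fin k :=
  ⟨if i.val % 2 = 0 then i.val + 1 else i.val - 1, by
    obtain ⟨h, rfl⟩ := hk
    split_ifs <;> omega⟩

lemma thetaPartner_thetaPartner {k : ℕ} (hk : Even k) (i : Fin k) :
    thetaPartner hk (thetaPartner hk i) = i := by
  ext
  simp only [thetaPartner]
  split_ifs <;> omega

lemma ThetaM_apply {k : ℕ} (hk : Even k) (i j : Fin k) :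
    ThetaM k i j =
      if j = thetaPartner hk i then (if i.val % 2 = 0 then 1 else -1) else 0 := by
  simp only [ThetaM, thetaPartner, of_apply, Fin.ext_iff]
  split_ifs <;> first | rfl | omega

lemma ThetaM_transpose (k : ℕ) : (ThetaM k)ᵀ = -ThetaM k := by
  ext i j
  simp only [ThetaM, transpose_apply, Matrix.neg_apply, of_apply]
  split_ifs <;> first | (exfalso; omega) | norm_num

lemma ThetaM_mul_self {k : ℕ} (hk : Even k) : ThetaM k * ThetaM k = -1 := by
  ext i j
  have hsign : (thetaPartner hk i).val % 2 = 0 ↔ ¬ i.val % 2 = 0 := by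
    simp only [thetaPartner]
    split_ifs <;> omega
  simp only [mul_apply, ThetaM_apply hk i, ite_mul, zero_mul, Finset.sum_ite_eq',
    Finset.mem_univ, if_true, ThetaM_apply hk (thetaPartner hk i), thetaPartner_thetaPartner,
    hsign, Matrix.neg_apply, Matrix.one_apply, eq_comm (a := j)]
  split_ifs <;> norm_num

section Conjugation

variable {R n p : Type*} [CommRing R] [Fintype n] [Fintype p] [DecidableEq n] [DecidableEq p]
  {Θ : Matrix n n R} {θ : Matrix p p R}

lemma conj_realizability_eq (hΘ : Θ * Θ = -1) (hθ : θ * θ = -1) (hΘt : Θᵀ = -Θ)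
    (hθt : θᵀ = -θ) (A : Matrix n n R) (Bu : Matrix n p R) (C : Matrix p n R) :
    Θ * (A * Θ + Θ * Aᵀ + Bu * θ * Buᵀ + Θ * Cᵀ * θ * θ * (Θ * Cᵀ * θ)ᵀ) * Θ =
      Θ * Bu * θ * Buᵀ * Θ - Θ * A - Aᵀ * Θ - Cᵀ * θ * C := by
  have hΘ' : ∀ X : Matrix n n R, Θ * (Θ * X) = -X := fun X => by
    rw [← Matrix.mul_assoc, hΘ, Matrix.neg_mul, Matrix.one_mul]
  have hθ' : ∀ X : Matrix p n R, θ * (θ * X) = -X := fun X => by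
    rw [← Matrix.mul_assoc, hθ, Matrix.neg_mul, Matrix.one_mul]
  simp only [Matrix.mul_add, Matrix.add_mul, transpose_mul, transpose_transpose, hΘt, hθt,
    Matrix.mul_assoc, hΘ, hΘ', hθ', Matrix.mul_neg, Matrix.neg_mul, Matrix.mul_one, neg_neg]
  abel

end Conjugation

theorem additional_noises_at_least_rank_S_general
    (n nu m : ℕ) (hne : Even n) (hnue : Even nu)
    (A : Matrix (Fin n) (Fin n) ℝ) (Bu : Matrix (Fin n) (Fin nu) ℝ)
    (C : Matrix (Fin nu) (Fin n) ℝ)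
    (S : Matrix (Fin n) (Fin n) ℝ)
    (hS : S = ThetaM n * Bu * ThetaM nu * Buᵀ * ThetaM n
              - ThetaM n * A - Aᵀ * ThetaM n - Cᵀ * ThetaM nu * C)
    (Bv1 : Matrix (Fin n) (Fin nu) ℝ) (Bv2 : Matrix (Fin n) (Fin m) ℝ)
    (hBv1 : Bv1 = ThetaM n * Cᵀ * ThetaM nu)
    (hPR : A * ThetaM n + ThetaM n * Aᵀ + Bu * ThetaM nu * Buᵀ +
        Bv1 * ThetaM nu * Bv1ᵀ + Bv2 * ThetaM m * Bv2ᵀ = 0) :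
    m ≥ S.rank := by
  have hS_factor : S = ThetaM n * Bv2 * -(ThetaM m * Bv2ᵀ * ThetaM n) := by
    rw [hS, ← conj_realizability_eq (ThetaM_mul_self hne) (ThetaM_mul_self hnue)
      (ThetaM_transpose n) (ThetaM_transpose nu), ← hBv1, eq_neg_of_add_eq_zero_left hPR]
    simp only [Matrix.mul_neg, Matrix.neg_mul, Matrix.mul_assoc]
  calc S.rank ≤ (ThetaM n * Bv2).rank := hS_factor ▸ rank_mul_le_left _ _
    _ ≤ m := (rank_le_card_width _).trans_eq (Fintype.card_fin m)

/-- **Theorem 2 (necessity).** Any physical realization of the strictly proper system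
`(A, Bu, C)` requires at least `rank S̃` additional quantum noise channels, where
`S̃ = Θ Bu Θ_{nu} Buᵀ Θ − Θ A − Aᵀ Θ − Cᵀ Θ_{nu} C`. -/
theorem additional_noises_at_least_rank_S
    (n nu m : ℕ) (hn : 0 < n) (hne : Even n) (hnu : 0 < nu) (hnue : Even nu)
    (hm : 0 < m) (hme : Even m)
    (A : Matrix (Fin n) (Fin n) ℝ) (Bu : Matrix (Fin n) (Fin nu) ℝ)
    (C : Matrix (Fin nu) (Fin n) ℝ)
    (S : Matrix (Fin n) (Fin n) ℝ)
    (hS : S = ThetaM n * Bu * ThetaM nu * Buᵀ * ThetaM n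
              - ThetaM n * A - Aᵀ * ThetaM n - Cᵀ * ThetaM nu * C)
    (Bv1 : Matrix (Fin n) (Fin nu) ℝ) (Bv2 : Matrix (Fin n) (Fin m) ℝ)
    (hBv1 : Bv1 = ThetaM n * Cᵀ * ThetaM nu)
    (hPR : A * ThetaM n + ThetaM n * Aᵀ + Bu * ThetaM nu * Buᵀ +
        Bv1 * ThetaM nu * Bv1ᵀ + Bv2 * ThetaM m * Bv2ᵀ = 0) :
    m ≥ S.rank :=
  additional_noises_at_least_rank_S_general n nu m hne hnue A Bu C S hS Bv1 Bv2 hBv1 hPR
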